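/- arXiv:0806.1088 — 4 statements merged into one kernel-verified Lean document; each statement's English description precedes it below -/
import Mathlib

section
/- If G is an unmixed bipartite graph on {x_1,...,x_n} ∪ {y_1,...,y_n} with no isolated vertices, then the vertices can be relabeled so that {x_i, y_i} is an edge of G for every i. -/
/-!
The right part `Y` of the bipartition is a vertex cover, and it is minimal because no vertex
of `Y` is isolated, so unmixedness forces every minimal vertex cover to have `n` elements.
For a set `S` of left vertices, `N(S) ∪ (X \ S)` is a vertex cover; a minimal cover inside it
has `n` elements, whence `|S| ≤ |N(S)|`. Hall's marriage theorem then gives a perfect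
matching, i.e. the relabeling.
-/

open Finset

/-- `C` is a vertex cover of the graph `G`. -/
def IsVC {α : Type*} (G : SimpleGraph α) (C : Finset α) : Prop :=
  ∀ ⦃u v : α⦄, G.Adj u v → u ∈ C ∨ v ∈ C

/-- `C` is a minimal vertex cover of the graph `G`. -/
def IsMinVC {α : Type*} (G : SimpleGraph α) (C : Finset α) : Prop :=
  IsVC G C ∧ ∀ C' ⊂ C, ¬ IsVC G C'

/-- `G` is unmixed: all minimal vertex covers have the same cardinality. -/
def Unmixed {α : Type*} (G : SimpleGraph α) : Prop :=
  ∀ C C' : Finset α, IsMinVC G C → IsMinVC G C' → C.card = C'.card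

/-- `G` is bipartite with respect to the given sum decomposition of its vertex set:
all edges go between the two parts. -/
def Bip {m n : ℕ} (G : SimpleGraph (Fin m ⊕ Fin n)) : Prop :=
  (∀ i j, ¬ G.Adj (Sum.inl i) (Sum.inl j)) ∧ ∀ i j, ¬ G.Adj (Sum.inr i) (Sum.inr j)

/-- the set `{x_i : i ∈ S} ∪ {y_j : j ∉ S}`, where `x_i = Sum.inl i`, `y_j = Sum.inr j`. -/
def coverOf {n : ℕ} (S : Finset (Fin n)) : Finset (Fin n ⊕ Fin n) :=
  S.image Sum.inl ∪ Sᶜ.image Sum.inr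

/-- the "x-part" `C̄ = {i : x_i ∈ C}` of a set of vertices `C`. -/
def xpart {n : ℕ} (C : Finset (Fin n ⊕ Fin n)) : Finset (Fin n) :=
  Finset.univ.filter fun i => Sum.inl i ∈ C

theorem IsVC.exists_isMinVC_subset {α : Type*} {G : SimpleGraph α} {C : Finset α}
    (hC : IsVC G C) : ∃ C' ⊆ C, IsMinVC G C' := by
  induction C using Finset.strongInduction with
  | _ C ih =>
    by_cases hmin : ∀ C' ⊂ C, ¬ IsVC G C'
    · exact ⟨C, Subset.refl C, hC, hmin⟩
    · push Not at hmin
      obtain ⟨C', hC'C, hC'⟩ := hmin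
      obtain ⟨C'', hC''C', hC''⟩ := ih C' hC'C hC'
      exact ⟨C'', hC''C'.trans hC'C.subset, hC''⟩

section Bipartite

variable {m n : ℕ} {G : SimpleGraph (Fin m ⊕ Fin n)}

open Classical in
noncomputable def rightNeighbors (G : SimpleGraph (Fin m ⊕ Fin n)) (i : Fin m) :
    Finset (Fin n) :=
  univ.filter fun j => G.Adj (Sum.inl i) (Sum.inr j)

theorem mem_rightNeighbors {i : Fin m} {j : Fin n} :
    j ∈ rightNeighbors G i ↔ G.Adj (Sum.inl i) (Sum.inr j) := by
  simp [rightNeighbors]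

theorem Bip.isVC_of_forall_adj (hbip : Bip G) {C : Finset (Fin m ⊕ Fin n)}
    (hC : ∀ i j, G.Adj (Sum.inl i) (Sum.inr j) → Sum.inl i ∈ C ∨ Sum.inr j ∈ C) :
    IsVC G C := by
  rintro (i | j) (i' | j') hadj
  · exact absurd hadj (hbip.1 i i')
  · exact hC i j' hadj
  · exact (hC i' j hadj.symm).symm
  · exact absurd hadj (hbip.2 j j')

theorem Bip.isMinVC_image_inr (hbip : Bip G) (hiso : ∀ j, ∃ w, G.Adj (Sum.inr j) w) :
    IsMinVC G (univ.image Sum.inr) := by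
  refine ⟨hbip.isVC_of_forall_adj fun _ j _ => Or.inr (by simp), ?_⟩
  intro C hCY hC
  obtain ⟨_, hyY, hyC⟩ := exists_of_ssubset hCY
  obtain ⟨j, -, rfl⟩ := mem_image.mp hyY
  obtain ⟨w | k, hw⟩ := hiso j
  · -- the other endpoint `x_w` of an edge at `y_j` would have to lie in `C ⊆ Y`
    rcases hC hw with hj | hw
    · exact hyC hj
    · simpa using hCY.subset hw
  · exact hbip.2 j k hw

/-- Hall's condition in deficiency form. -/
theorem Unmixed.card_add_le_card_biUnion_rightNeighbors_add (hunm : Unmixed G)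
    (hbip : Bip G) (hiso : ∀ j, ∃ w, G.Adj (Sum.inr j) w) (S : Finset (Fin m)) :
    #S + n ≤ #(S.biUnion (rightNeighbors G)) + m := by
  classical
  set C : Finset (Fin m ⊕ Fin n) :=
    (S.biUnion (rightNeighbors G)).image Sum.inr ∪ Sᶜ.image Sum.inl
  have hC : IsVC G C := by
    refine hbip.isVC_of_forall_adj fun i j hij => ?_
    by_cases hi : i ∈ S
    · exact Or.inr (mem_union_left _ (mem_image_of_mem _
        (mem_biUnion.mpr ⟨i, hi, mem_rightNeighbors.mpr hij⟩)))
    · exact Or.inl (mem_union_right _ (mem_image_of_mem _ (mem_compl.mpr hi)))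
  obtain ⟨C₁, hC₁C, hC₁⟩ := hC.exists_isMinVC_subset
  have hC₁card : #C₁ = n := by
    simpa [card_image_of_injective _ Sum.inr_injective]
      using hunm C₁ _ hC₁ (hbip.isMinVC_image_inr hiso)
  have hCcard : #C ≤ #(S.biUnion (rightNeighbors G)) + (m - #S) := by
    calc #C ≤ #((S.biUnion (rightNeighbors G)).image Sum.inr) + #(Sᶜ.image Sum.inl) :=
          card_union_le _ _
      _ = #(S.biUnion (rightNeighbors G)) + (m - #S) := by
          rw [card_image_of_injective _ Sum.inr_injective,
            card_image_of_injective _ Sum.inl_injective, card_compl, Fintype.card_fin]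
  have hSm : #S ≤ m := by simpa using card_le_univ S
  have := card_le_card hC₁C
  omega

end Bipartite

/-- the vertices of an unmixed bipartite graph with no isolated vertices
can be relabeled so that `{x_i, y_i}` is an edge for every `i`. -/
theorem stmt_1 {n : ℕ} (G : SimpleGraph (Fin n ⊕ Fin n)) (hbip : Bip G)
    (hiso : ∀ v, ∃ w, G.Adj v w) (hunm : Unmixed G) :
    ∃ σ : Equiv.Perm (Fin n), ∀ i, G.Adj (Sum.inl i) (Sum.inr (σ i)) := by
  have hall : ∀ S : Finset (Fin n), #S ≤ #(S.biUnion (rightNeighbors G)) := fun S => by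
    have := hunm.card_add_le_card_biUnion_rightNeighbors_add hbip (fun j => hiso _) S
    omega
  obtain ⟨f, hf_inj, hf⟩ := (all_card_le_biUnion_card_iff_exists_injective _).mp hall
  exact ⟨Equiv.ofBijective f (Finite.injective_iff_bijective.mp hf_inj),
    fun i => mem_rightNeighbors.mp (hf i)⟩
end

section
/- Let G be an unmixed bipartite graph on {x_1,...,x_n} ∪ {y_1,...,y_n} with {x_i,y_i} ∈ E(G) for all i. If C and C' are minimal vertex covers with C̄ = {i : x_i ∈ C} and C̄' = {i : x_i ∈ C'}, then the set {x_i : i ∈ C̄ ∩ C̄'} ∪ {y_j : j ∉ C̄ ∩ C̄'} is also a minimal vertex cover of G. -/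
open Finset

/-!
Since `{x_1, …, x_n}` is a minimal vertex cover and `G` is unmixed, every minimal vertex cover
`C` has `n` elements; the matching edges force `coverOf C̄ ⊆ C`, so `C = coverOf C̄`.
For bipartite `G`, `coverOf S` is a cover iff every edge `x_i y_j` has `i ∈ S` or `j ∉ S`,
a condition stable under intersection, and because of the matching edges every cover of the
form `coverOf S` is already minimal.
-/

variable {n : ℕ}

@[simp] lemma inl_mem_coverOf {S : Finset (Fin n)} {i : Fin n} :
    Sum.inl i ∈ coverOf S ↔ i ∈ S := by
  simp [coverOf]

@[simp] lemma inr_mem_coverOf {S : Finset (Fin n)} {j : Fin n} :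
    Sum.inr j ∈ coverOf S ↔ j ∉ S := by
  simp [coverOf]

@[simp] lemma mem_xpart {C : Finset (Fin n ⊕ Fin n)} {i : Fin n} :
    i ∈ xpart C ↔ Sum.inl i ∈ C := by
  simp [xpart]

lemma card_coverOf (S : Finset (Fin n)) : #(coverOf S) = n := by
  rw [coverOf, card_union_of_disjoint (by simp [disjoint_left]),
    card_image_of_injective _ Sum.inl_injective, card_image_of_injective _ Sum.inr_injective,
    card_compl, Fintype.card_fin, Nat.add_sub_cancel' (card_le_univ S |>.trans_eq (by simp))]

section
variable {G : SimpleGraph (Fin n ⊕ Fin n)}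

lemma isVC_coverOf_iff (hbip : Bip G) {S : Finset (Fin n)} :
    IsVC G (coverOf S) ↔ ∀ i j, G.Adj (Sum.inl i) (Sum.inr j) → i ∈ S ∨ j ∉ S := by
  refine ⟨fun h i j hij => by simpa using h hij, fun h u v huv => ?_⟩
  rcases u with i | j <;> rcases v with i' | j'
  · exact absurd huv (hbip.1 i i')
  · simpa using h i j' huv
  · simpa [or_comm] using h i' j huv.symm
  · exact absurd huv (hbip.2 j j')

lemma isVC_coverOf_inter (hbip : Bip G) {S T : Finset (Fin n)} (hS : IsVC G (coverOf S))
    (hT : IsVC G (coverOf T)) : IsVC G (coverOf (S ∩ T)) := by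
  rw [isVC_coverOf_iff hbip] at hS hT ⊢
  intro i j hij
  rw [mem_inter, mem_inter]
  have := hS i j hij
  have := hT i j hij
  tauto

lemma not_isVC_of_ssubset_coverOf (hmatch : ∀ i, G.Adj (Sum.inl i) (Sum.inr i))
    {S : Finset (Fin n)} {D : Finset (Fin n ⊕ Fin n)} (hD : D ⊂ coverOf S) : ¬ IsVC G D := by
  obtain ⟨u, hu, huD⟩ := exists_of_ssubset hD
  intro hvc
  rcases u with i | i
  · rcases hvc (hmatch i) with h | h
    · exact huD h
    · exact (inr_mem_coverOf.1 (hD.1 h)) (inl_mem_coverOf.1 hu)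
  · rcases hvc (hmatch i) with h | h
    · exact (inr_mem_coverOf.1 hu) (inl_mem_coverOf.1 (hD.1 h))
    · exact huD h

lemma isMinVC_coverOf_iff (hmatch : ∀ i, G.Adj (Sum.inl i) (Sum.inr i)) {S : Finset (Fin n)} :
    IsMinVC G (coverOf S) ↔ IsVC G (coverOf S) :=
  ⟨And.left, fun h => ⟨h, fun _ hD => not_isVC_of_ssubset_coverOf hmatch hD⟩⟩

lemma coverOf_xpart_subset (hmatch : ∀ i, G.Adj (Sum.inl i) (Sum.inr i))
    {C : Finset (Fin n ⊕ Fin n)} (hC : IsVC G C) : coverOf (xpart C) ⊆ C := by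
  rintro (i | j) hu
  · simpa using hu
  · simp only [inr_mem_coverOf, mem_xpart] at hu
    exact (hC (hmatch j)).resolve_left hu

lemma eq_coverOf_xpart_of_isMinVC (hbip : Bip G) (hmatch : ∀ i, G.Adj (Sum.inl i) (Sum.inr i))
    (hunm : Unmixed G) {C : Finset (Fin n ⊕ Fin n)} (hC : IsMinVC G C) :
    C = coverOf (xpart C) := by
  have huniv : IsMinVC G (coverOf univ) :=
    (isMinVC_coverOf_iff hmatch).2 <| (isVC_coverOf_iff hbip).2 fun i _ _ => .inl (mem_univ i)
  refine (eq_of_subset_of_card_le (coverOf_xpart_subset hmatch hC.1) ?_).symm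
  rw [hunm C _ hC huniv, card_coverOf, card_coverOf]

end

/-- intersections: if `C`, `C'` are minimal vertex covers then so is the
set corresponding to `C̄ ∩ C̄'`. -/
theorem stmt_3 {n : ℕ} (G : SimpleGraph (Fin n ⊕ Fin n)) (hbip : Bip G)
    (hmatch : ∀ i, G.Adj (Sum.inl i) (Sum.inr i)) (hunm : Unmixed G)
    (C C' : Finset (Fin n ⊕ Fin n)) (hC : IsMinVC G C) (hC' : IsMinVC G C') :
    IsMinVC G (coverOf (xpart C ∩ xpart C')) := by
  rw [eq_coverOf_xpart_of_isMinVC hbip hmatch hunm hC] at hC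
  rw [eq_coverOf_xpart_of_isMinVC hbip hmatch hunm hC'] at hC'
  exact (isMinVC_coverOf_iff hmatch).2 (isVC_coverOf_inter hbip hC.1 hC'.1)
end

section
/- Let P = {p_1,...,p_n} be a finite poset and G_P the bipartite graph on {x_1,...,x_n} ∪ {y_1,...,y_n} with edges {x_i, y_j} whenever p_i ≤ p_j. For every order ideal α of P, the set α_x ∪ α_y is a minimal vertex cover of G_P, where α_x = {x_i : p_i ∈ α} and α_y = {y_j : p_j ∉ α}. -/
/-!
An edge `x_a y_b` (so `a ≤ b`) missed by `α_x ∪ α_y` would have `a ∉ α` and `b ∈ α`, which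
downward closure forbids. The cover contains exactly one endpoint of each edge `{x_i, y_i}` of the
perfect matching, so removing any of its vertices uncovers that vertex's matching edge.
-/

open Finset

/-- the bipartite graph `G_P` of a poset: edges `{x_i, y_j}` whenever `p_i ≤ p_j`. -/
def posetGraph (P : Type*) [PartialOrder P] : SimpleGraph (P ⊕ P) where
  Adj u v := (∃ i j, i ≤ j ∧ u = Sum.inl i ∧ v = Sum.inr j) ∨
    (∃ i j, i ≤ j ∧ u = Sum.inr j ∧ v = Sum.inl i)
  symm := by
    constructor
    rintro u v (⟨i, j, h, rfl, rfl⟩ | ⟨i, j, h, rfl, rfl⟩)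
    · exact Or.inr ⟨i, j, h, rfl, rfl⟩
    · exact Or.inl ⟨i, j, h, rfl, rfl⟩
  loopless := by
    constructor
    rintro u (⟨i, j, h, rfl, heq⟩ | ⟨i, j, h, rfl, heq⟩) <;> simp at heq

/-- `α` is an order ideal (poset ideal, downward closed subset) of `P`. -/
def IsOrderIdeal {P : Type*} [PartialOrder P] (α : Finset P) : Prop :=
  ∀ a ∈ α, ∀ b, b ≤ a → b ∈ α

/-- the set `α_x ∪ α_y = {x_i : p_i ∈ α} ∪ {y_j : p_j ∉ α}` -/
def idealCover {P : Type*} [PartialOrder P] [Fintype P] [DecidableEq P]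
    (α : Finset P) : Finset (P ⊕ P) :=
  α.image Sum.inl ∪ αᶜ.image Sum.inr

section

variable {V : Type*} {P : Type*} [PartialOrder P]

theorem IsVC.isMinVC_of_forall_exists_adj_notMem {G : SimpleGraph V} {C : Finset V}
    (hC : IsVC G C) (h : ∀ v ∈ C, ∃ w ∉ C, G.Adj v w) : IsMinVC G C := by
  refine ⟨hC, fun C' hC' hvc => ?_⟩
  obtain ⟨v, hvC, hvC'⟩ := Finset.exists_of_ssubset hC'
  obtain ⟨w, hwC, hvw⟩ := h v hvC
  exact (hvc hvw).elim hvC' fun hwC' => hwC (hC'.subset hwC')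

@[simp]
theorem posetGraph_adj_inl_inr {a b : P} :
    (posetGraph P).Adj (Sum.inl a) (Sum.inr b) ↔ a ≤ b := by
  simp [posetGraph]

theorem posetGraph_adj_swap (v : P ⊕ P) : (posetGraph P).Adj v v.swap := by
  cases v with
  | inl a => simp
  | inr a => exact (posetGraph P).adj_symm (by simp)

section idealCover

variable [Fintype P] [DecidableEq P] {α : Finset P}

@[simp]
theorem inl_mem_idealCover {a : P} : Sum.inl a ∈ idealCover α ↔ a ∈ α := by
  simp [idealCover]

@[simp]
theorem inr_mem_idealCover {a : P} : Sum.inr a ∈ idealCover α ↔ a ∉ α := by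
  simp [idealCover]

theorem swap_mem_idealCover_iff (v : P ⊕ P) : v.swap ∈ idealCover α ↔ v ∉ idealCover α := by
  cases v <;> simp

theorem IsOrderIdeal.isVC_idealCover (hα : IsOrderIdeal α) :
    IsVC (posetGraph P) (idealCover α) := by
  have edge_covered : ∀ a b : P, a ≤ b → Sum.inl a ∈ idealCover α ∨ Sum.inr b ∈ idealCover α := by
    intro a b hab
    simp only [inl_mem_idealCover, inr_mem_idealCover]
    exact or_not_of_imp fun hb => hα b hb a hab
  rintro u v (⟨a, b, hab, rfl, rfl⟩ | ⟨a, b, hab, rfl, rfl⟩)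
  · exact edge_covered a b hab
  · exact (edge_covered a b hab).symm

end idealCover

end

/-- for every order ideal `α` of `P`, the set `α_x ∪ α_y` is a
minimal vertex cover of `G_P`. -/
theorem stmt_9 (P : Type*) [PartialOrder P] [Fintype P] [DecidableEq P]
    (α : Finset P) (hα : IsOrderIdeal α) :
    IsMinVC (posetGraph P) (idealCover α) :=
  hα.isVC_idealCover.isMinVC_of_forall_exists_adj_notMem fun v hv =>
    ⟨v.swap, (swap_mem_idealCover_iff v).not_left.mpr hv, posetGraph_adj_swap v⟩
end

section
/- Let P = {p_1,...,p_n} be a finite poset and G_P the bipartite graph with edges {x_i, y_j} for p_i ≤ p_j. Then every minimal vertex cover of G_P equals α_x ∪ α_y for some order ideal α of P, where α_x = {x_i : p_i ∈ α} and α_y = {y_j : p_j ∉ α}. -/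
open Finset

/-!
Every vertex `v` of a minimal vertex cover `C` has a private edge, i.e. a neighbour outside `C`,
since otherwise `C \ {v}` would still be a cover. For `G_P` this gives: if `x_a ∈ C` and `p_b ≤ p_a`,
the private edge `{x_a, y_j}` of `x_a` is also an edge `{x_b, y_j}` with `y_j ∉ C`, so `x_b ∈ C`;
hence `α = {p_i : x_i ∈ C}` is an order ideal. If moreover `y_j ∈ C`, its private edge `{x_i, y_j}`
has `p_i ≤ p_j` and `x_i ∉ C`, contradicting `x_j ∈ C`. Finally the edge `{x_j, y_j}` forces
`y_j ∈ C` whenever `x_j ∉ C`.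
-/

theorem IsMinVC.exists_adj_notMem {α : Type*} [DecidableEq α] {G : SimpleGraph α}
    {C : Finset α} (hC : IsMinVC G C) {v : α} (hv : v ∈ C) : ∃ w, G.Adj v w ∧ w ∉ C := by
  by_contra! hnbr
  refine hC.2 (C.erase v) (erase_ssubset hv) fun u w huw => ?_
  by_cases hu : u = v
  · subst hu
    exact Or.inr (mem_erase.2 ⟨huw.ne.symm, hnbr w huw⟩)
  by_cases hw : w = v
  · subst hw
    exact Or.inl (mem_erase.2 ⟨huw.ne, hnbr u huw.symm⟩)
  rcases hC.1 huw with hu' | hw'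
  · exact Or.inl (mem_erase.2 ⟨hu, hu'⟩)
  · exact Or.inr (mem_erase.2 ⟨hw, hw'⟩)

namespace posetGraph

variable {P : Type*} [PartialOrder P]

@[simp]
theorem adj_inl_inr {i j : P} : (posetGraph P).Adj (.inl i) (.inr j) ↔ i ≤ j := by
  simp [posetGraph]

@[simp]
theorem adj_inr_inl {i j : P} : (posetGraph P).Adj (.inr j) (.inl i) ↔ i ≤ j := by
  simp [posetGraph]

@[simp]
theorem not_adj_inl_inl {i j : P} : ¬ (posetGraph P).Adj (.inl i) (.inl j) := by
  simp [posetGraph]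

@[simp]
theorem not_adj_inr_inr {i j : P} : ¬ (posetGraph P).Adj (.inr i) (.inr j) := by
  simp [posetGraph]

end posetGraph

section PosetCover

variable {P : Type*} [PartialOrder P] {C : Finset (P ⊕ P)}

theorem IsVC.inr_mem_of_inl_notMem (hC : IsVC (posetGraph P) C) {j : P}
    (hj : Sum.inl j ∉ C) : Sum.inr j ∈ C :=
  (hC (posetGraph.adj_inl_inr.2 le_rfl)).resolve_left hj

variable [DecidableEq P]

theorem IsMinVC.inl_mem_of_le (hC : IsMinVC (posetGraph P) C) {a b : P}
    (ha : Sum.inl a ∈ C) (hba : b ≤ a) : Sum.inl b ∈ C := by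
  obtain ⟨w, hadj, hw⟩ := hC.exists_adj_notMem ha
  rcases w with i | j
  · exact absurd hadj posetGraph.not_adj_inl_inl
  · exact (hC.1 (posetGraph.adj_inl_inr.2 (hba.trans (posetGraph.adj_inl_inr.1 hadj)))).resolve_right hw

theorem IsMinVC.inr_notMem_of_inl_mem (hC : IsMinVC (posetGraph P) C) {j : P}
    (hj : Sum.inl j ∈ C) : Sum.inr j ∉ C := fun hyj => by
  obtain ⟨w, hadj, hw⟩ := hC.exists_adj_notMem hyj
  rcases w with i | k
  · exact hw (hC.inl_mem_of_le hj (posetGraph.adj_inr_inl.1 hadj))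
  · exact posetGraph.not_adj_inr_inr hadj

theorem IsMinVC.inr_mem_iff (hC : IsMinVC (posetGraph P) C) {j : P} :
    Sum.inr j ∈ C ↔ Sum.inl j ∉ C :=
  ⟨fun hyj hxj => hC.inr_notMem_of_inl_mem hxj hyj, hC.1.inr_mem_of_inl_notMem⟩

end PosetCover

/-- every minimal vertex cover of `G_P` equals `α_x ∪ α_y` for some
order ideal `α` of `P`. -/
theorem stmt_10 (P : Type*) [PartialOrder P] [Fintype P] [DecidableEq P]
    (C : Finset (P ⊕ P)) (hC : IsMinVC (posetGraph P) C) :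
    ∃ α : Finset P, IsOrderIdeal α ∧ C = idealCover α := by
  refine ⟨univ.filter fun i => Sum.inl i ∈ C, ?_, ?_⟩
  · intro a ha b hba
    simp only [mem_filter, mem_univ, true_and] at ha ⊢
    exact hC.inl_mem_of_le ha hba
  · ext (i | j)
    · simp [idealCover]
    · simp [idealCover, hC.inr_mem_iff]
end
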